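/- Let α > −1 and κ < √2 be real, and let P(z) be the outer parametrix, i.e. P(z) := diag(χ, χ^{−1}) · (1/2)·[[ν(z) + ν(z)^{−1}, −i(ν(z) − ν(z)^{−1})], [i(ν(z) − ν(z)^{−1}), ν(z) + ν(z)^{−1}]] · diag(D(z)^{−1}, D(z)) on ℂ \ [κ, √2], with ν, D, χ as in the construction. Then lim_{z→∞} P(z) = I (the 2 × 2 identity matrix) and lim_{z→∞} z·(P(z) − I) = P₁, where P₁ = (1/4)(√2 − κ) · diag(χ, χ^{−1}) · [[α, i], [−i, −α]] · diag(χ^{−1}, χ). -/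

import Mathlib

open Filter Topology Set

/-- The conformal map `j(w) = w + (w² - 1)^{1/2}` from `ℂ \ [-1, 1]` to the exterior
of the unit disk, with the branch of the square root (cut on `[-1, 1]`, realized as
`(w-1)^{1/2}(w+1)^{1/2}` with principal branches) for which `j(w) > 1` for real
`w > 1`. -/
noncomputable def jmap (w : ℂ) : ℂ :=
  w + (w - 1) ^ ((1 : ℂ) / 2) * (w + 1) ^ ((1 : ℂ) / 2)

/-- The Szegő function
`D(z) = ((z - √2)/j(1 + 2(z - √2)/(√2 - κ)))^{α/2}`, with the principal branch of
the power. -/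
noncomputable def szego (α κ : ℝ) (z : ℂ) : ℂ :=
  ((z - (Real.sqrt 2 : ℂ)) /
      jmap (1 + 2 * (z - (Real.sqrt 2 : ℂ)) / ((Real.sqrt 2 : ℂ) - (κ : ℂ))))
    ^ ((α : ℂ) / 2)

/-- The fourth root `ν(z) = ((z - √2)/(z - κ))^{1/4}`, with the principal branch
(so that `ν(z) → 1` as `z → +∞`). -/
noncomputable def nu (κ : ℝ) (z : ℂ) : ℂ :=
  ((z - (Real.sqrt 2 : ℂ)) / (z - (κ : ℂ))) ^ ((1 : ℂ) / 4)

/-- The constant `χ = ((√2 - κ)/4)^{α/2}`. -/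
noncomputable def chi (α κ : ℝ) : ℝ := ((Real.sqrt 2 - κ) / 4) ^ (α / 2)

/-- The outer parametrix
`P(z) = diag(χ, χ⁻¹) · (1/2)[[ν + ν⁻¹, -i(ν - ν⁻¹)], [i(ν - ν⁻¹), ν + ν⁻¹]]
  · diag(D(z)⁻¹, D(z))`. -/
noncomputable def Pmat (α κ : ℝ) (z : ℂ) : Matrix (Fin 2) (Fin 2) ℂ :=
  !![((chi α κ : ℝ) : ℂ), 0; 0, (((chi α κ : ℝ) : ℂ))⁻¹] *
    ((1 / 2 : ℂ) •
      !![nu κ z + (nu κ z)⁻¹, -Complex.I * (nu κ z - (nu κ z)⁻¹);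
         Complex.I * (nu κ z - (nu κ z)⁻¹), nu κ z + (nu κ z)⁻¹]) *
    !![(szego α κ z)⁻¹, 0; 0, szego α κ z]

/-!
Substituting `u = z⁻¹`, for `‖z‖ > max √2 |κ|` one has `ν(z) = N(u)` and `D(z) = R(u)^{α/2}` with
`N(u) = ((1 - √2 u) / (1 - κ u))^{1/4}` and
`R(u) = (√2 - κ)/2 · (1 - √2 u) / (1 - (√2 + κ) u / 2 + (1 - √2 u)^{1/2} (1 - κ u)^{1/2})`,
all holomorphic at `u = 0`. The only delicate point is the branch bookkeeping
`(z - c)^e = z^e (1 - c/z)^e` for real `|c| < ‖z‖`: it holds because `z` and `z - c` lie on the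
same side of the real axis while `1 - c/z` lies in the right half-plane. So every entry of `P(z)`
is `F(z⁻¹)` with `F` differentiable at `0`, whence `P(z) → F(0)` and `z (P(z) - F(0)) → F'(0)`.
Finally `N(0) = 1`, `N'(0) = -(√2 - κ)/4`, `R(0) = (√2 - κ)/4`, `R'(0) = -(√2 - κ)²/8`, so `D → χ`
with logarithmic derivative `-α(√2 - κ)/4` in `u`, and the product rule gives `F(0) = I`,
`F'(0) = P₁`.
-/

open scoped Real

namespace Complex

theorem arg_add_arg_mem_Ioc_of_re_pos {z w : ℂ} (hz : z ≠ 0) (hw : 0 < w.re)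
    (him : (z * w).im = z.im) : arg z + arg w ∈ Ioc (-π) π := by
  have hw0 : w ≠ 0 := fun h => by simp [h] at hw
  have hwarg := abs_lt.1 (abs_arg_lt_pi_div_two_iff.2 (Or.inl hw))
  have hsin : ‖w‖ * Real.sin (arg z + arg w) = Real.sin (arg z) := by
    have hangle : Real.sin (arg z + arg w) = Real.sin (arg (z * w)) := by
      rw [← Real.Angle.sin_coe, Real.Angle.coe_add, ← arg_mul_coe_angle hz hw0,
        Real.Angle.sin_coe]
    have := norm_mul_sin_arg (z * w)
    rw [him, ← norm_mul_sin_arg z, norm_mul, ← hangle] at this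
    exact mul_left_cancel₀ (norm_ne_zero_iff.2 hz) (by linarith)
  have hwpos : 0 < ‖w‖ := norm_pos_iff.2 hw0
  have hz_lo := neg_pi_lt_arg z
  have hz_hi := arg_le_pi z
  constructor
  · by_contra! h
    have hsum : 0 ≤ Real.sin (arg z + arg w) := by
      rw [← Real.sin_add_two_pi]
      exact Real.sin_nonneg_of_nonneg_of_le_pi (by linarith) (by linarith)
    have hz_sin : Real.sin (arg z) < 0 := Real.sin_neg_of_neg_of_neg_pi_lt (by linarith) hz_lo
    nlinarith
  · by_contra! h
    have hsum : Real.sin (arg z + arg w) < 0 := by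
      rw [← neg_neg (Real.sin _), ← Real.sin_sub_pi, neg_lt_zero]
      exact Real.sin_pos_of_pos_of_lt_pi (by linarith) (by linarith)
    have hz_sin : 0 ≤ Real.sin (arg z) := Real.sin_nonneg_of_nonneg_of_le_pi (by linarith) hz_hi
    nlinarith

theorem mul_cpow_of_arg_add_mem {x y : ℂ} (hx : x ≠ 0) (hy : y ≠ 0)
    (h : arg x + arg y ∈ Ioc (-π) π) (e : ℂ) : (x * y) ^ e = x ^ e * y ^ e := by
  rw [cpow_def_of_ne_zero (mul_ne_zero hx hy), cpow_def_of_ne_zero hx, cpow_def_of_ne_zero hy,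
    log_mul hx hy h, add_mul, exp_add]

theorem ofReal_mul_cpow {r : ℝ} (hr : 0 < r) {x : ℂ} (hx : x ≠ 0) (e : ℂ) :
    ((r : ℂ) * x) ^ e = (r : ℂ) ^ e * x ^ e :=
  mul_cpow_of_arg_add_mem (ofReal_ne_zero.2 hr.ne') hx
    (by simpa [arg_ofReal_of_nonneg hr.le] using arg_mem_Ioc x) e

theorem sub_ofReal_cpow {z : ℂ} {c : ℝ} (h : |c| < ‖z‖) (e : ℂ) :
    (z - c) ^ e = z ^ e * (1 - c * z⁻¹) ^ e := by
  have hz : z ≠ 0 := norm_pos_iff.1 ((abs_nonneg c).trans_lt h)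
  have hfactor : z - c = z * (1 - c * z⁻¹) := by field_simp
  have hre : 0 < (1 - c * z⁻¹).re := by
    have hsmall : ‖(c : ℂ) * z⁻¹‖ < 1 := by
      rwa [norm_mul, norm_inv, norm_real, Real.norm_eq_abs, ← div_eq_mul_inv,
        div_lt_one (norm_pos_iff.2 hz)]
    have := (re_le_norm ((c : ℂ) * z⁻¹)).trans_lt hsmall
    simp only [sub_re, one_re]
    linarith
  rw [hfactor, mul_cpow_of_arg_add_mem hz (fun h => by simp [h] at hre)
    (arg_add_arg_mem_Ioc_of_re_pos hz hre (by rw [← hfactor]; simp))]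

theorem cpow_half_mul_self (x : ℂ) : x ^ ((1 : ℂ) / 2) * x ^ ((1 : ℂ) / 2) = x := by
  rw [← sq, one_div, cpow_ofNat_inv_pow]

end Complex

theorem HasDerivAt.tendsto_smul_sub_comp_inv_cobounded {𝕜 E : Type*} [NontriviallyNormedField 𝕜]
    [NormedAddCommGroup E] [NormedSpace 𝕜 E] {f : 𝕜 → E} {d : E} (hf : HasDerivAt f d 0) :
    Tendsto (fun z => z • (f z⁻¹ - f 0)) (Bornology.cobounded 𝕜) (𝓝 d) := by
  refine ((hasDerivAt_iff_tendsto_slope.1 hf).comp tendsto_inv₀_cobounded').congr fun z => ?_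
  simp [slope_def_module]

theorem ContinuousAt.tendsto_comp_inv_cobounded {𝕜 E : Type*} [NontriviallyNormedField 𝕜]
    [TopologicalSpace E] {f : 𝕜 → E} (hf : ContinuousAt f 0) :
    Tendsto (fun z => f z⁻¹) (Bornology.cobounded 𝕜) (𝓝 (f 0)) :=
  hf.tendsto.comp tendsto_inv₀_cobounded

noncomputable def nuRecip (s k : ℝ) (u : ℂ) : ℂ :=
  ((1 - s * u) / (1 - k * u)) ^ ((1 : ℂ) / 4)

noncomputable def jmapRootRecip (s k : ℝ) (u : ℂ) : ℂ :=
  (1 - s * u) ^ ((1 : ℂ) / 2) * (1 - k * u) ^ ((1 : ℂ) / 2)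

noncomputable def szegoBaseRecip (s k : ℝ) (u : ℂ) : ℂ :=
  (s - k) / 2 * (1 - s * u) / (1 - (s + k) / 2 * u + jmapRootRecip s k u)

noncomputable def szegoRecip (α s k : ℝ) (u : ℂ) : ℂ :=
  szegoBaseRecip s k u ^ ((α : ℂ) / 2)

theorem nu_eq_nuRecip (κ : ℝ) {z : ℂ} (hz : z ≠ 0) : nu κ z = nuRecip (Real.sqrt 2) κ z⁻¹ := by
  unfold nu nuRecip
  congr 1
  conv_rhs => rw [← mul_div_mul_left _ _ hz]
  congr 1 <;> field_simp

theorem jmap_eq_of_abs_lt_norm {s k : ℝ} (hks : k < s) {z : ℂ} (hs : |s| < ‖z‖)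
    (hk : |k| < ‖z‖) :
    jmap (1 + 2 * (z - s) / (s - k)) =
      (2 / (s - k) : ℝ) * z * (1 - (s + k) / 2 * z⁻¹ + jmapRootRecip s k z⁻¹) := by
  have hz : z ≠ 0 := norm_pos_iff.1 ((abs_nonneg s).trans_lt hs)
  have hsk : (s : ℂ) - k ≠ 0 := by exact_mod_cast (sub_pos.2 hks).ne'
  have ht : 0 < 2 / (s - k) := div_pos two_pos (sub_pos.2 hks)
  have hzs : z - s ≠ 0 := fun h => by
    rw [sub_eq_zero.1 h, Complex.norm_real, Real.norm_eq_abs] at hs; exact lt_irrefl _ hs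
  have hzk : z - k ≠ 0 := fun h => by
    rw [sub_eq_zero.1 h, Complex.norm_real, Real.norm_eq_abs] at hk; exact lt_irrefl _ hk
  have hw : 1 + 2 * (z - s) / (s - k) = (2 / (s - k) : ℝ) * z * (1 - (s + k) / 2 * z⁻¹) := by
    push_cast; field_simp; ring
  have hw₁ : 1 + 2 * (z - s) / (s - k) - 1 = (2 / (s - k) : ℝ) * (z - s) := by
    push_cast; field_simp; ring
  have hw₂ : 1 + 2 * (z - s) / (s - k) + 1 = (2 / (s - k) : ℝ) * (z - k) := by
    push_cast; field_simp; ring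
  unfold jmap jmapRootRecip
  rw [hw₁, hw₂, Complex.ofReal_mul_cpow ht hzs, Complex.ofReal_mul_cpow ht hzk,
    Complex.sub_ofReal_cpow hs, Complex.sub_ofReal_cpow hk, hw]
  linear_combination
    ((1 - s * z⁻¹) ^ ((1 : ℂ) / 2) * (1 - k * z⁻¹) ^ ((1 : ℂ) / 2)) *
      (((2 / (s - k) : ℝ) : ℂ) ^ ((1 : ℂ) / 2) * ((2 / (s - k) : ℝ) : ℂ) ^ ((1 : ℂ) / 2) *
        Complex.cpow_half_mul_self z + z * Complex.cpow_half_mul_self ((2 / (s - k) : ℝ) : ℂ))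

theorem szego_eq_szegoRecip (α : ℝ) {κ : ℝ} (hκ : κ < Real.sqrt 2) {z : ℂ}
    (hs : Real.sqrt 2 < ‖z‖) (hk : |κ| < ‖z‖) :
    szego α κ z = szegoRecip α (Real.sqrt 2) κ z⁻¹ := by
  have hz : z ≠ 0 := norm_pos_iff.1 ((Real.sqrt_nonneg 2).trans_lt hs)
  unfold szego szegoRecip szegoBaseRecip
  rw [jmap_eq_of_abs_lt_norm hκ (by rwa [abs_of_nonneg (Real.sqrt_nonneg 2)]) hk]
  congr 1
  rw [show z - Real.sqrt 2 = z * (1 - Real.sqrt 2 * z⁻¹) by field_simp, mul_comm _ z, mul_assoc,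
    mul_div_mul_left _ _ hz, mul_comm, ← div_div, div_eq_mul_inv _ (_ : ℂ), mul_comm]
  push_cast
  rw [div_div_eq_mul_div]
  ring

theorem hasDerivAt_one_sub_mul (a : ℂ) : HasDerivAt (fun u : ℂ => 1 - a * u) (-a) 0 := by
  simpa using ((hasDerivAt_id (0 : ℂ)).const_mul a).const_sub 1

theorem hasDerivAt_one_sub_mul_cpow (a e : ℂ) :
    HasDerivAt (fun u : ℂ => (1 - a * u) ^ e) (-(e * a)) 0 := by
  simpa using (hasDerivAt_one_sub_mul a).cpow_const (c := e) (by simp)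

theorem nuRecip_zero (s k : ℝ) : nuRecip s k 0 = 1 := by
  simp [nuRecip]

theorem hasDerivAt_nuRecip (s k : ℝ) : HasDerivAt (nuRecip s k) (-((s : ℂ) - k) / 4) 0 := by
  have hquot := (hasDerivAt_one_sub_mul (s : ℂ)).div (hasDerivAt_one_sub_mul (k : ℂ)) (by simp)
  refine (hquot.cpow_const (c := (1 : ℂ) / 4) (by simp)).congr_deriv ?_
  simp only [Pi.div_apply, mul_zero, sub_zero, div_one, one_pow, Complex.one_cpow]
  ring

theorem jmapRootRecip_zero (s k : ℝ) : jmapRootRecip s k 0 = 1 := by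
  simp [jmapRootRecip]

theorem hasDerivAt_jmapRootRecip (s k : ℝ) :
    HasDerivAt (jmapRootRecip s k) (-((s : ℂ) + k) / 2) 0 := by
  refine ((hasDerivAt_one_sub_mul_cpow (s : ℂ) (1 / 2)).mul
    (hasDerivAt_one_sub_mul_cpow (k : ℂ) (1 / 2))).congr_deriv ?_
  simp only [mul_zero, sub_zero, Complex.one_cpow]
  ring

theorem szegoBaseRecip_zero (s k : ℝ) : szegoBaseRecip s k 0 = ((s - k) / 4 : ℝ) := by
  simp only [szegoBaseRecip, jmapRootRecip_zero]
  push_cast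
  ring

theorem hasDerivAt_szegoBaseRecip (s k : ℝ) :
    HasDerivAt (szegoBaseRecip s k) (-((s : ℂ) - k) ^ 2 / 8) 0 := by
  have hden := ((hasDerivAt_one_sub_mul (((s : ℂ) + k) / 2))).add (hasDerivAt_jmapRootRecip s k)
  have hden0 : 1 - ((s : ℂ) + k) / 2 * 0 + jmapRootRecip s k 0 = 2 := by
    rw [jmapRootRecip_zero]; ring
  refine (((hasDerivAt_one_sub_mul (s : ℂ)).const_mul (((s : ℂ) - k) / 2)).div hden
    (by simp only [Pi.add_apply]; rw [hden0]; exact two_ne_zero)).congr_deriv ?_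
  simp only [Pi.add_apply]
  rw [hden0]
  ring

theorem szegoRecip_zero (α : ℝ) {s k : ℝ} (hks : k < s) :
    szegoRecip α s k 0 = ((((s - k) / 4) ^ (α / 2) : ℝ) : ℂ) := by
  rw [szegoRecip, szegoBaseRecip_zero, Complex.ofReal_cpow (by linarith)]
  push_cast
  rfl

theorem hasDerivAt_szegoRecip (α : ℝ) {s k : ℝ} (hks : k < s) :
    HasDerivAt (szegoRecip α s k)
      (-(α * ((s : ℂ) - k)) / 4 * ((((s - k) / 4) ^ (α / 2) : ℝ) : ℂ)) 0 := by
  have hbase : (0 : ℝ) < (s - k) / 4 := by linarith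
  refine ((hasDerivAt_szegoBaseRecip s k).cpow_const (c := (α : ℂ) / 2)
    (by rw [szegoBaseRecip_zero]; exact Complex.ofReal_mem_slitPlane.2 hbase)).congr_deriv ?_
  rw [szegoBaseRecip_zero, Complex.cpow_sub _ _ (by exact_mod_cast hbase.ne'), Complex.cpow_one,
    Complex.ofReal_cpow hbase.le]
  push_cast
  field_simp
  ring

open Complex in
noncomputable def parametrix (χ ν d : ℂ) : Matrix (Fin 2) (Fin 2) ℂ :=
  !![χ, 0; 0, χ⁻¹] * ((1 / 2 : ℂ) • !![ν + ν⁻¹, -I * (ν - ν⁻¹); I * (ν - ν⁻¹), ν + ν⁻¹]) *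
    !![d⁻¹, 0; 0, d]

open Complex in
theorem parametrix_eq_entries (χ ν d : ℂ) :
    parametrix χ ν d =
      !![χ * ((ν + ν⁻¹) / 2) * d⁻¹, χ * (-I * ((ν - ν⁻¹) / 2)) * d;
        χ⁻¹ * (I * ((ν - ν⁻¹) / 2)) * d⁻¹, χ⁻¹ * ((ν + ν⁻¹) / 2) * d] := by
  simp only [parametrix, Matrix.smul_of, Matrix.smul_cons, Matrix.smul_empty, Matrix.mul_fin_two,
    smul_eq_mul]
  congrm !![?_, ?_; ?_, ?_] <;> ring

theorem parametrix_one_self {χ : ℂ} (hχ : χ ≠ 0) : parametrix χ 1 χ = 1 := by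
  rw [parametrix_eq_entries]
  ext i j
  fin_cases i <;> fin_cases j <;> simp [hχ]

open Complex in
theorem hasDerivAt_parametrix_apply {n g : ℂ → ℂ} {n' ℓ χ : ℂ} (hχ : χ ≠ 0)
    (hn : HasDerivAt n n' 0) (hn0 : n 0 = 1) (hg : HasDerivAt g (ℓ * χ) 0) (hg0 : g 0 = χ)
    (i j : Fin 2) :
    HasDerivAt (fun u => parametrix χ (n u) (g u) i j)
      ((!![χ, 0; 0, χ⁻¹] * !![-ℓ, -I * n'; I * n', ℓ] * !![χ⁻¹, 0; 0, χ]) i j) 0 := by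
  have hninv : HasDerivAt (fun u => (n u)⁻¹) (-n') 0 := by
    refine (hn.inv (by rw [hn0]; exact one_ne_zero)).congr_deriv ?_
    rw [hn0]
    ring
  have hginv : HasDerivAt (fun u => (g u)⁻¹) (-ℓ * χ⁻¹) 0 := by
    refine (hg.inv (by rw [hg0]; exact hχ)).congr_deriv ?_
    rw [hg0]
    field_simp
  have hcosh : HasDerivAt (fun u => (n u + (n u)⁻¹) / 2) 0 0 := by
    simpa using (hn.add hninv).div_const 2
  have hsinh : HasDerivAt (fun u => (n u - (n u)⁻¹) / 2) n' 0 := by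
    simpa using (hn.sub hninv).div_const 2
  have hcosh0 : (n 0 + (n 0)⁻¹) / 2 = 1 := by norm_num [hn0]
  have hsinh0 : (n 0 - (n 0)⁻¹) / 2 = 0 := by norm_num [hn0]
  rw [show !![χ, 0; 0, χ⁻¹] * !![-ℓ, -I * n'; I * n', ℓ] * !![χ⁻¹, 0; 0, χ] =
      !![-ℓ, χ * (-I * n') * χ; χ⁻¹ * (I * n') * χ⁻¹, ℓ] by
    simp only [Matrix.mul_fin_two]
    congrm !![?_, ?_; ?_, ?_] <;> field_simp <;> ring]
  simp only [parametrix_eq_entries]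
  fin_cases i <;> fin_cases j
  · refine ((hcosh.const_mul χ).mul hginv).congr_deriv ?_
    show _ = -ℓ
    rw [hcosh0, hg0]
    field_simp
    ring
  · refine (((hsinh.const_mul (-I)).const_mul χ).mul hg).congr_deriv ?_
    show _ = χ * (-I * n') * χ
    rw [hsinh0, hg0]
    ring
  · refine (((hsinh.const_mul I).const_mul χ⁻¹).mul hginv).congr_deriv ?_
    show _ = χ⁻¹ * (I * n') * χ⁻¹
    rw [hsinh0, hg0]
    ring
  · refine ((hcosh.const_mul χ⁻¹).mul hg).congr_deriv ?_
    show _ = ℓ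
    rw [hcosh0, hg0]
    field_simp
    ring

theorem eventually_Pmat_eq_parametrix (α : ℝ) {κ : ℝ} (hκ : κ < Real.sqrt 2) :
    ∀ᶠ z in Bornology.cobounded ℂ,
      Pmat α κ z = parametrix (chi α κ) (nuRecip (Real.sqrt 2) κ z⁻¹)
        (szegoRecip α (Real.sqrt 2) κ z⁻¹) := by
  filter_upwards [tendsto_norm_cobounded_atTop.eventually_gt_atTop (Real.sqrt 2 + |κ|)] with z hz
  have hz0 : z ≠ 0 := norm_pos_iff.1 ((by positivity : (0 : ℝ) ≤ _).trans_lt hz)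
  rw [← nu_eq_nuRecip κ hz0, ← szego_eq_szegoRecip α hκ (by linarith [abs_nonneg κ])
    (by linarith [Real.sqrt_nonneg 2])]
  rfl

theorem outer_parametrix_normalization_general (α κ : ℝ)
    (hκ : κ < Real.sqrt 2) :
    (∀ i j : Fin 2,
      Tendsto (fun z : ℂ => Pmat α κ z i j) (cocompact ℂ)
        (𝓝 ((1 : Matrix (Fin 2) (Fin 2) ℂ) i j))) ∧
    (∀ i j : Fin 2,
      Tendsto (fun z : ℂ => z * (Pmat α κ z - 1) i j) (cocompact ℂ)
        (𝓝 ((((1 / 4 : ℂ) * (((Real.sqrt 2 - κ) : ℝ) : ℂ)) •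
          (!![((chi α κ : ℝ) : ℂ), 0; 0, (((chi α κ : ℝ) : ℂ))⁻¹] *
            !![(α : ℂ), Complex.I; -Complex.I, -(α : ℂ)] *
            !![(((chi α κ : ℝ) : ℂ))⁻¹, 0; 0, ((chi α κ : ℝ) : ℂ)])) i j))) := by
  rw [← Metric.cobounded_eq_cocompact]
  have hχ : ((chi α κ : ℝ) : ℂ) ≠ 0 := by
    exact_mod_cast (Real.rpow_pos_of_pos (by linarith) _).ne'
  have hderiv := hasDerivAt_parametrix_apply hχ (hasDerivAt_nuRecip (Real.sqrt 2) κ)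
    (nuRecip_zero (Real.sqrt 2) κ) (hasDerivAt_szegoRecip α hκ) (szegoRecip_zero α hκ)
  have hvalue : parametrix (chi α κ) (nuRecip (Real.sqrt 2) κ 0)
      (szegoRecip α (Real.sqrt 2) κ 0) = 1 := by
    rw [nuRecip_zero, szegoRecip_zero α hκ]
    exact parametrix_one_self hχ
  have hnear := eventually_Pmat_eq_parametrix α hκ
  refine ⟨fun i j => ?_, fun i j => ?_⟩
  · rw [← hvalue]
    refine (hderiv i j).continuousAt.tendsto_comp_inv_cobounded.congr' ?_
    filter_upwards [hnear] with z hz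
    rw [hz]
  · convert (hderiv i j).tendsto_smul_sub_comp_inv_cobounded.congr' ?_ using 3
    · refine congrFun (congrFun ?_ i) j
      rw [← Matrix.smul_mul, ← Matrix.mul_smul]
      congr 2
      simp only [Matrix.smul_of, Matrix.smul_cons, Matrix.smul_empty, smul_eq_mul]
      congrm !![?_, ?_; ?_, ?_] <;> push_cast <;> ring
    · filter_upwards [hnear] with z hz
      rw [hvalue, hz, Matrix.sub_apply, smul_eq_mul]

/-- Normalization of the outer parametrix at infinity: entrywise,
`P(z) → I` and `z(P(z) - I) → P₁` as `|z| → ∞`, where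
`P₁ = (1/4)(√2 - κ) diag(χ, χ⁻¹) [[α, i], [-i, -α]] diag(χ⁻¹, χ)`. -/
theorem outer_parametrix_normalization (α κ : ℝ) (hα : -1 < α)
    (hκ : κ < Real.sqrt 2) :
    (∀ i j : Fin 2,
      Tendsto (fun z : ℂ => Pmat α κ z i j) (cocompact ℂ)
        (𝓝 ((1 : Matrix (Fin 2) (Fin 2) ℂ) i j))) ∧
    (∀ i j : Fin 2,
      Tendsto (fun z : ℂ => z * (Pmat α κ z - 1) i j) (cocompact ℂ)
        (𝓝 ((((1 / 4 : ℂ) * (((Real.sqrt 2 - κ) : ℝ) : ℂ)) •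
          (!![((chi α κ : ℝ) : ℂ), 0; 0, (((chi α κ : ℝ) : ℂ))⁻¹] *
            !![(α : ℂ), Complex.I; -Complex.I, -(α : ℂ)] *
            !![(((chi α κ : ℝ) : ℂ))⁻¹, 0; 0, ((chi α κ : ℝ) : ℂ)])) i j))) :=
  outer_parametrix_normalization_general α κ hκ
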